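/- arXiv:2011.01322 — 2 statements merged into one kernel-verified Lean document; each statement's English description precedes it below -/
import Mathlib

section
/- Let N ≥ 2 be an integer, let λ be a nonzero real number, and let φ ∈ L²(ℝ^{N-1}; ℂ). Then ∫_{ℝ^{N-1}} ∫_{0}^{∞} x_N · (λ² + 2|ξ'|²)² (λ² + |ξ'|²)^{-1} · exp(−2 x_N √(λ² + |ξ'|²)) · |φ(ξ')|² dx_N dξ' ≤ ∫_{ℝ^{N-1}} |φ(ξ')|² dξ'. -/
open MeasureTheory ENNReal Real

/-! For each frequency `ξ` the `t`-integral is explicit: with `s = λ² + |ξ|²`,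
`∫₀^∞ t e^{-2t√s} dt = 1/(4s)`, so the inner integral equals
`((λ² + 2|ξ|²) / (2s))² |φ(ξ)|²`, and `λ² + 2|ξ|² ≤ 2s`. -/

lemma lintegral_Ioi_mul_exp_neg_mul {r : ℝ} (hr : 0 < r) :
    ∫⁻ t in Set.Ioi (0 : ℝ), ENNReal.ofReal (t * exp (-r * t)) = ENNReal.ofReal (1 / r ^ 2) := by
  have hint : IntegrableOn (fun t : ℝ => t * exp (-r * t)) (Set.Ioi 0) := by
    simpa only [Real.rpow_one] using
      integrableOn_rpow_mul_exp_neg_mul_rpow (p := 1) (s := 1) (by norm_num) zero_lt_one hr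
  have hnonneg : 0 ≤ᵐ[volume.restrict (Set.Ioi 0)] fun t : ℝ => t * exp (-r * t) :=
    (ae_restrict_iff' measurableSet_Ioi).2 <|
      .of_forall fun t ht => mul_nonneg (le_of_lt ht) (exp_pos _).le
  rw [← ofReal_integral_eq_lintegral_ofReal hint hnonneg]
  have h := integral_rpow_mul_exp_neg_mul_Ioi (a := 2) (by norm_num) hr
  norm_num only [Gamma_two, Real.rpow_one, Real.rpow_two, pow_one, mul_one, one_div, neg_mul] at h ⊢
  rw [h, inv_pow]

lemma lintegral_Ioi_mul_mul_exp_neg_two_mul_sqrt_mul {s : ℝ} (hs : 0 < s) {c m : ℝ}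
    (hcm : 0 ≤ c * m) :
    ∫⁻ t in Set.Ioi (0 : ℝ), ENNReal.ofReal (t * c * exp (-2 * t * √s) * m) =
      ENNReal.ofReal (c * m / (4 * s)) := by
  have hsqrt : 0 < 2 * √s := by positivity
  calc ∫⁻ t in Set.Ioi (0 : ℝ), ENNReal.ofReal (t * c * exp (-2 * t * √s) * m)
      = ∫⁻ t in Set.Ioi (0 : ℝ),
          ENNReal.ofReal (c * m) * ENNReal.ofReal (t * exp (-(2 * √s) * t)) := by
        refine lintegral_congr fun t => ?_
        rw [← ENNReal.ofReal_mul hcm]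
        ring_nf
    _ = ENNReal.ofReal (c * m / (4 * s)) := by
        rw [lintegral_const_mul' _ _ ofReal_ne_top, lintegral_Ioi_mul_exp_neg_mul hsqrt,
          ← ENNReal.ofReal_mul hcm, mul_pow, sq_sqrt hs.le]
        ring_nf

lemma sq_add_two_mul_mul_inv_mul_div_le {a b m : ℝ} (ha : 0 ≤ a) (hb : 0 ≤ b) (hab : 0 < a + b)
    (hm : 0 ≤ m) :
    (a + 2 * b) ^ 2 * (a + b)⁻¹ * m / (4 * (a + b)) ≤ m := by
  have hsq : (a + 2 * b) ^ 2 ≤ (2 * (a + b)) ^ 2 := by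
    nlinarith [mul_nonneg ha (by linarith : 0 ≤ 3 * a + 4 * b)]
  calc (a + 2 * b) ^ 2 * (a + b)⁻¹ * m / (4 * (a + b))
      = (a + 2 * b) ^ 2 / (2 * (a + b)) ^ 2 * m := by field_simp; ring
    _ ≤ 1 * m := by gcongr; exact div_le_one_of_le₀ hsq (sq_nonneg _)
    _ = m := one_mul m

theorem halfspace_neumann_weighted_second_derivative_general (N : ℕ)
    (lam : ℝ) (hlam : lam ≠ 0)
    (φ : EuclideanSpace ℝ (Fin (N - 1)) → ℂ) :
    (∫⁻ ξ, ∫⁻ t in Set.Ioi (0 : ℝ),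
        ENNReal.ofReal (t * ((lam ^ 2 + 2 * ‖ξ‖ ^ 2) ^ 2 * (lam ^ 2 + ‖ξ‖ ^ 2)⁻¹) *
          Real.exp (-2 * t * Real.sqrt (lam ^ 2 + ‖ξ‖ ^ 2)) * ‖φ ξ‖ ^ 2)) ≤
      ∫⁻ ξ, ENNReal.ofReal (‖φ ξ‖ ^ 2) := by
  refine lintegral_mono fun ξ => ?_
  have hs : 0 < lam ^ 2 + ‖ξ‖ ^ 2 := by positivity
  rw [lintegral_Ioi_mul_mul_exp_neg_two_mul_sqrt_mul hs (by positivity)]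
  exact ENNReal.ofReal_le_ofReal <|
    sq_add_two_mul_mul_inv_mul_div_le (sq_nonneg lam) (sq_nonneg ‖ξ‖) hs (sq_nonneg _)

/-- Weighted second-derivative estimate `‖√x_N ∇²u‖² ≤ ‖h‖²` for the explicit
half-space Neumann Helmholtz solution, on the Fourier side. -/
theorem halfspace_neumann_weighted_second_derivative (N : ℕ) (hN : 2 ≤ N)
    (lam : ℝ) (hlam : lam ≠ 0)
    (φ : EuclideanSpace ℝ (Fin (N - 1)) → ℂ) (hφ : MemLp φ 2) :
    (∫⁻ ξ, ∫⁻ t in Set.Ioi (0 : ℝ),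
        ENNReal.ofReal (t * ((lam ^ 2 + 2 * ‖ξ‖ ^ 2) ^ 2 * (lam ^ 2 + ‖ξ‖ ^ 2)⁻¹) *
          Real.exp (-2 * t * Real.sqrt (lam ^ 2 + ‖ξ‖ ^ 2)) * ‖φ ξ‖ ^ 2)) ≤
      ∫⁻ ξ, ENNReal.ofReal (‖φ ξ‖ ^ 2) :=
  halfspace_neumann_weighted_second_derivative_general N lam hlam φ
end

section
/- For every ω > 0 and every real number r < 1, there exists a constant C_r > 0, depending only on ω and r, such that for all real λ ≥ ω and all nonnegative reals A, B, K satisfying (i) λ B² + A² ≤ K A^{1/2} B^{1/2} and (ii) λ² B² ≤ A² + K A^{1/2} B^{1/2}, one has λ^{3r/2} B + λ^{r/2} A ≤ C_r K. -/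
/-!
Write `S = √(AB)`. Multiplying `A² ≤ K S` (from (i)) by `λ² B² ≤ 2 K S` (from (i) and (ii))
gives `λ² S⁴ ≤ 2 K² S²`, hence `λ S ≤ 2 K`. Feeding this back into the two bounds yields the
endpoint case `r = 1`: `λ^{1/2} A ≤ 2 K` and `λ^{3/2} B ≤ 2 K`. For `r < 1` the surplus powers
of `λ` are negative and are bounded by the same powers of `ω`.
-/

section EnergyBounds

variable {lam A B K S : ℝ}

theorem mul_le_two_mul_of_energy (hK : 0 ≤ K) (hS : 0 ≤ S)
    (hSsq : S ^ 2 = A * B) (hA : A ^ 2 ≤ K * S) (hB : lam ^ 2 * B ^ 2 ≤ 2 * (K * S)) :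
    lam * S ≤ 2 * K := by
  have hquartic : (lam * S) ^ 2 * S ^ 2 ≤ 2 * K ^ 2 * S ^ 2 := by
    calc (lam * S) ^ 2 * S ^ 2 = lam ^ 2 * (S ^ 2) ^ 2 := by ring
      _ = (lam ^ 2 * B ^ 2) * A ^ 2 := by rw [hSsq]; ring
      _ ≤ 2 * (K * S) * (K * S) := mul_le_mul hB hA (sq_nonneg A) (by positivity)
      _ = 2 * K ^ 2 * S ^ 2 := by ring
  rcases hS.eq_or_lt with rfl | hSpos
  · simpa using hK
  have hsq : (lam * S) ^ 2 ≤ (2 * K) ^ 2 := by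
    nlinarith [le_of_mul_le_mul_right hquartic (by positivity), sq_nonneg K]
  exact le_of_pow_le_pow_left₀ two_ne_zero (by positivity) hsq

theorem mul_sq_le_and_pow_three_mul_sq_le_of_energy (hlam : 0 ≤ lam) (hK : 0 ≤ K) (hS : 0 ≤ S)
    (hSsq : S ^ 2 = A * B)
    (h1 : lam * B ^ 2 + A ^ 2 ≤ K * S) (h2 : lam ^ 2 * B ^ 2 ≤ A ^ 2 + K * S) :
    lam * A ^ 2 ≤ 2 * K ^ 2 ∧ lam ^ 3 * B ^ 2 ≤ 4 * K ^ 2 := by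
  have hA : A ^ 2 ≤ K * S := by nlinarith [mul_nonneg hlam (sq_nonneg B)]
  have hB : lam ^ 2 * B ^ 2 ≤ 2 * (K * S) := by linarith
  have hlamS := mul_le_two_mul_of_energy hK hS hSsq hA hB
  constructor
  · calc lam * A ^ 2 ≤ lam * (K * S) := mul_le_mul_of_nonneg_left hA hlam
      _ = K * (lam * S) := by ring
      _ ≤ K * (2 * K) := mul_le_mul_of_nonneg_left hlamS hK
      _ = 2 * K ^ 2 := by ring
  · calc lam ^ 3 * B ^ 2 = lam * (lam ^ 2 * B ^ 2) := by ring
      _ ≤ lam * (2 * (K * S)) := mul_le_mul_of_nonneg_left hB hlam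
      _ = 2 * K * (lam * S) := by ring
      _ ≤ 2 * K * (2 * K) := mul_le_mul_of_nonneg_left hlamS (by positivity)
      _ = 4 * K ^ 2 := by ring

end EnergyBounds

theorem rpow_div_two_sq {x : ℝ} (hx : 0 ≤ x) (y : ℝ) : (x ^ (y / 2)) ^ 2 = x ^ y := by
  rw [← Real.rpow_natCast, ← Real.rpow_mul hx]
  norm_num

theorem rpow_half_mul_le_and_rpow_three_halves_mul_le {lam A B K : ℝ} (hlam : 0 ≤ lam)
    (hA : 0 ≤ A) (hB : 0 ≤ B) (hK : 0 ≤ K)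
    (h1 : lam * B ^ 2 + A ^ 2 ≤ K * (A ^ ((1 : ℝ) / 2) * B ^ ((1 : ℝ) / 2)))
    (h2 : lam ^ 2 * B ^ 2 ≤ A ^ 2 + K * (A ^ ((1 : ℝ) / 2) * B ^ ((1 : ℝ) / 2))) :
    lam ^ ((1 : ℝ) / 2) * A ≤ 2 * K ∧ lam ^ ((3 : ℝ) / 2) * B ≤ 2 * K := by
  have hSsq : (A ^ ((1 : ℝ) / 2) * B ^ ((1 : ℝ) / 2)) ^ 2 = A * B := by
    rw [mul_pow, rpow_div_two_sq hA, rpow_div_two_sq hB, Real.rpow_one, Real.rpow_one]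
  obtain ⟨hAbound, hBbound⟩ :=
    mul_sq_le_and_pow_three_mul_sq_le_of_energy hlam hK (by positivity) hSsq h1 h2
  constructor
  · refine le_of_pow_le_pow_left₀ two_ne_zero (by positivity) ?_
    rw [mul_pow, rpow_div_two_sq hlam, Real.rpow_one]
    nlinarith [sq_nonneg K]
  · refine le_of_pow_le_pow_left₀ two_ne_zero (by positivity) ?_
    rw [mul_pow, rpow_div_two_sq hlam, show (3 : ℝ) = (3 : ℕ) by norm_num, Real.rpow_natCast]
    linarith

theorem rpow_mul_le_of_rpow_mul_le {ω lam a c p s : ℝ} (hω : 0 < ω) (hlam : ω ≤ lam)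
    (ha : 0 ≤ a) (hps : p ≤ s) (h : lam ^ s * a ≤ c) : lam ^ p * a ≤ ω ^ (p - s) * c := by
  have hlam0 : 0 < lam := hω.trans_le hlam
  calc lam ^ p * a = lam ^ (p - s) * (lam ^ s * a) := by
        rw [← mul_assoc, ← Real.rpow_add hlam0, sub_add_cancel]
    _ ≤ lam ^ (p - s) * c := mul_le_mul_of_nonneg_left h (by positivity)
    _ ≤ ω ^ (p - s) * c :=
        mul_le_mul_of_nonneg_right (Real.rpow_le_rpow_of_nonpos hω hlam (by linarith))
          ((mul_nonneg (by positivity) ha).trans h)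

/-- Iteration lemma for the complex-λ Dirichlet interior estimate with weighted
datum: for every `r < 1`, the two inequalities imply
`λ^{3r/2} B + λ^{r/2} A ≤ C_r K`. -/
theorem dirichlet_weighted_iteration_lemma (ω r : ℝ) (hω : 0 < ω) (hr : r < 1) :
    ∃ C > (0 : ℝ), ∀ lam A B K : ℝ, ω ≤ lam → 0 ≤ A → 0 ≤ B → 0 ≤ K →
      lam * B ^ 2 + A ^ 2 ≤ K * (A ^ ((1 : ℝ) / 2) * B ^ ((1 : ℝ) / 2)) →
      lam ^ 2 * B ^ 2 ≤ A ^ 2 + K * (A ^ ((1 : ℝ) / 2) * B ^ ((1 : ℝ) / 2)) →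
      lam ^ (3 * r / 2) * B + lam ^ (r / 2) * A ≤ C * K := by
  refine ⟨2 * (ω ^ (3 * r / 2 - 3 / 2) + ω ^ (r / 2 - 1 / 2)), by positivity, ?_⟩
  intro lam A B K hlam hA hB hK h1 h2
  obtain ⟨hAone, hBone⟩ :=
    rpow_half_mul_le_and_rpow_three_halves_mul_le (hω.le.trans hlam) hA hB hK h1 h2
  have hBr := rpow_mul_le_of_rpow_mul_le (p := 3 * r / 2) hω hlam hB (by linarith) hBone
  have hAr := rpow_mul_le_of_rpow_mul_le (p := r / 2) hω hlam hA (by linarith) hAone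
  linarith
end
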